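/- Assume μ, σ : [0,T] → ℝ are continuous deterministic functions with ∫_t^T σ_s² ds > 0 for all t < T. For the Gaussian claim X = x + ∫₀^T μ_s ds + ∫₀^T σ_s dW_s, the resilience rate of the dynamic Value-at-Risk at deterministic time t ∈ [0,T) exists and equals lim_{ε→0⁺} (1/ε) E[VaR_{t+ε}^α(X) − VaR_t^α(X)] = (z_α/2) σ_t² / √(∫_t^T σ_s² ds). In particular, it is negative for α ∈ (0,1/2), zero for α = 1/2, and positive for α ∈ (1/2,1). -/

import Mathlib

/-!
On `[0, T)` the expected VaR is `m - z_α √F` with `F s = ∫_s^T σ²`, and `F' = -σ²` by the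
fundamental theorem of calculus, so the resilience rate is a one-sided derivative given by the chain
rule. Its sign is that of `z_α`, which is compared with `0` through the symmetry of the standard
normal law about `0` (so `Φ 0 = 1/2`) and the strict monotonicity of its distribution function.
-/

open MeasureTheory ProbabilityTheory Filter Topology Set
open scoped ENNReal NNReal

namespace ProbabilityTheory

variable {v : ℝ≥0}

lemma gaussianReal_map_two_mul_sub_self (μ : ℝ) :
    (gaussianReal μ v).map (fun x ↦ 2 * μ - x) = gaussianReal μ v := by
  rw [gaussianReal_map_const_sub]; ring_nf

lemma gaussianReal_Iic_self (μ : ℝ) (hv : v ≠ 0) : gaussianReal μ v (Iic μ) = 2⁻¹ := by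
  have := nullSingletonClass_gaussianReal (μ := μ) hv
  have hsymm : gaussianReal μ v (Iic μ) = gaussianReal μ v (Ioi μ) := by
    rw [measure_congr Ioi_ae_eq_Ici]
    conv_rhs => rw [← gaussianReal_map_two_mul_sub_self μ]
    rw [Measure.map_apply (by fun_prop) measurableSet_Ici]
    congr 1
    ext x
    simp only [mem_Iic, mem_preimage, mem_Ici]
    constructor <;> intro <;> linarith
  have htotal : gaussianReal μ v (Iic μ) + gaussianReal μ v (Ioi μ) = 1 := by
    rw [← compl_Iic, measure_add_measure_compl measurableSet_Iic, measure_univ]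
  rw [← one_div, ENNReal.eq_div_iff two_ne_zero ENNReal.ofNat_ne_top, two_mul]
  nth_rw 2 [hsymm]
  exact htotal

lemma gaussianReal_Iic_strictMono (μ : ℝ) (hv : v ≠ 0) :
    StrictMono fun x ↦ gaussianReal μ v (Iic x) := by
  intro a b hab
  have := (gaussianReal_absolutelyContinuous' μ hv).isOpenPosMeasure
  have hIoc : 0 < gaussianReal μ v (Ioc a b) :=
    ((Measure.measure_Ioo_pos _).2 hab).trans_le (measure_mono Ioo_subset_Ioc_self)
  dsimp only
  rw [← Iic_union_Ioc_eq_Iic hab.le, measure_union (Iic_disjoint_Ioc le_rfl) measurableSet_Ioc]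
  exact ENNReal.lt_add_right (measure_ne_top _ _) hIoc.ne'

variable {μ x α : ℝ}

lemma lt_iff_of_gaussianReal_Iic_eq_ofReal (hv : v ≠ 0)
    (hx : gaussianReal μ v (Iic x) = ENNReal.ofReal α) : x < μ ↔ α < 1 / 2 := by
  rw [← (gaussianReal_Iic_strictMono μ hv).lt_iff_lt, hx, gaussianReal_Iic_self μ hv,
    ← ENNReal.ofReal_lt_ofReal_iff (by norm_num : (0 : ℝ) < 1 / 2)]
  simp

lemma lt_iff_of_gaussianReal_Iic_eq_ofReal' (hv : v ≠ 0)
    (hx : gaussianReal μ v (Iic x) = ENNReal.ofReal α) : μ < x ↔ 1 / 2 < α := by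
  rw [← (gaussianReal_Iic_strictMono μ hv).lt_iff_lt, hx, gaussianReal_Iic_self μ hv,
    ENNReal.lt_ofReal_iff_toReal_lt (by simp)]
  simp

lemma eq_of_gaussianReal_Iic_eq_ofReal_half (hv : v ≠ 0)
    (hx : gaussianReal μ v (Iic x) = ENNReal.ofReal (1 / 2)) : x = μ :=
  (gaussianReal_Iic_strictMono μ hv).injective <| hx.trans <| by simp [gaussianReal_Iic_self μ hv]

end ProbabilityTheory

lemma hasDerivAt_sqrt_integral_left {f : ℝ → ℝ} (hf : Continuous f) {t T : ℝ}
    (h : ∫ r in t..T, f r ≠ 0) :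
    HasDerivAt (fun s ↦ √(∫ r in s..T, f r)) (-f t / (2 * √(∫ r in t..T, f r))) t :=
  (intervalIntegral.integral_hasDerivAt_left (hf.intervalIntegrable t T)
    hf.stronglyMeasurable.stronglyMeasurableAtFilter hf.continuousAt).sqrt h

/-- `E s` stands for `E[VaR_s^α(X)]`, from which the stochastic integral has dropped out since
it has zero mean; `m = x + ∫₀^T μ_s ds`. -/
theorem resilience_stmt8_general
    (T t : ℝ) (ht : t ∈ Set.Ico 0 T)
    (σ : ℝ → ℝ) (hσ : Continuous σ)
    (hv : ∀ s ∈ Set.Ico 0 T, 0 < ∫ r in s..T, (σ r) ^ 2)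
    (hσt : σ t ≠ 0)
    (α zα : ℝ)
    (hz : gaussianReal 0 1 (Set.Iic zα) = ENNReal.ofReal α)
    (m : ℝ) (E : ℝ → ℝ)
    (hE : ∀ s ∈ Set.Ico 0 T, E s = m - zα * Real.sqrt (∫ r in s..T, (σ r) ^ 2)) :
    Tendsto (fun ε : ℝ => (1 / ε) * (E (t + ε) - E t)) (𝓝[>] (0 : ℝ))
        (𝓝 (zα / 2 * (σ t) ^ 2 / Real.sqrt (∫ r in t..T, (σ r) ^ 2))) ∧
    (α < 1 / 2 → zα / 2 * (σ t) ^ 2 / Real.sqrt (∫ r in t..T, (σ r) ^ 2) < 0) ∧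
    (α = 1 / 2 → zα / 2 * (σ t) ^ 2 / Real.sqrt (∫ r in t..T, (σ r) ^ 2) = 0) ∧
    (1 / 2 < α → 0 < zα / 2 * (σ t) ^ 2 / Real.sqrt (∫ r in t..T, (σ r) ^ 2)) := by
  obtain ⟨ht0, htT⟩ := ht
  have hvt := hv t ⟨ht0, htT⟩
  have hderiv : HasDerivAt (fun s ↦ m - zα * √(∫ r in s..T, σ r ^ 2))
      (zα / 2 * σ t ^ 2 / √(∫ r in t..T, σ r ^ 2)) t :=
    (((hasDerivAt_sqrt_integral_left (f := fun r ↦ σ r ^ 2) (by fun_prop) hvt.ne').const_mul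
      zα).const_sub m).congr_deriv (by ring)
  have hscale : 0 < σ t ^ 2 / √(∫ r in t..T, σ r ^ 2) :=
    div_pos (by positivity) (Real.sqrt_pos.2 hvt)
  refine ⟨?_, fun hα ↦ ?_, fun hα ↦ ?_, fun hα ↦ ?_⟩
  · refine hderiv.tendsto_slope_zero_right.congr' ?_
    filter_upwards [Ioo_mem_nhdsGT (sub_pos.2 htT)] with ε hε
    rw [hE t ⟨ht0, htT⟩, hE (t + ε) ⟨by linarith [hε.1], by linarith [hε.2]⟩, smul_eq_mul,
      one_div]
  · have hzα := (lt_iff_of_gaussianReal_Iic_eq_ofReal one_ne_zero hz).2 hα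
    rw [mul_div_assoc]
    exact mul_neg_of_neg_of_pos (by linarith) hscale
  · simp [eq_of_gaussianReal_Iic_eq_ofReal_half one_ne_zero (hα ▸ hz)]
  · have hzα := (lt_iff_of_gaussianReal_Iic_eq_ofReal' one_ne_zero hz).2 hα
    rw [mul_div_assoc]
    exact mul_pos (by linarith) hscale

/-- Resilience rate of the dynamic Value-at-Risk of a Gaussian claim.  With
`E s = E[VaR_s^α(X)] = m - z_α √(∫_s^T σ_r² dr)` (the stochastic-integral part has zero mean),
the resilience rate at `t ∈ [0,T)` exists and equals `(z_α/2) σ_t² / √(∫_t^T σ_r² dr)`;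
it is negative for `α ∈ (0,1/2)`, zero for `α = 1/2`, and positive for `α ∈ (1/2,1)`. -/
theorem resilience_stmt8
    (T t : ℝ) (ht : t ∈ Set.Ico 0 T)
    (σ : ℝ → ℝ) (hσ : Continuous σ)
    (hv : ∀ s ∈ Set.Ico 0 T, 0 < ∫ r in s..T, (σ r) ^ 2)
    (hσt : σ t ≠ 0)
    (α zα : ℝ) (hα : α ∈ Set.Ioo (0:ℝ) 1)
    (hz : gaussianReal 0 1 (Set.Iic zα) = ENNReal.ofReal α)
    (m : ℝ) (E : ℝ → ℝ)
    (hE : ∀ s ∈ Set.Ico 0 T, E s = m - zα * Real.sqrt (∫ r in s..T, (σ r) ^ 2)) :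
    Tendsto (fun ε : ℝ => (1 / ε) * (E (t + ε) - E t)) (𝓝[>] (0 : ℝ))
        (𝓝 (zα / 2 * (σ t) ^ 2 / Real.sqrt (∫ r in t..T, (σ r) ^ 2))) ∧
    (α < 1 / 2 → zα / 2 * (σ t) ^ 2 / Real.sqrt (∫ r in t..T, (σ r) ^ 2) < 0) ∧
    (α = 1 / 2 → zα / 2 * (σ t) ^ 2 / Real.sqrt (∫ r in t..T, (σ r) ^ 2) = 0) ∧
    (1 / 2 < α → 0 < zα / 2 * (σ t) ^ 2 / Real.sqrt (∫ r in t..T, (σ r) ^ 2)) :=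
  resilience_stmt8_general T t ht σ hσ hv hσt α zα hz m E hE
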